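/- arXiv:1303.0739 — 3 statements merged into one kernel-verified Lean document; each statement's English description precedes it below -/
import Mathlib

section
/- Let C be a nonzero compact Hermitian operator on a separable Hilbert space and D₁ a compact real diagonal operator such that ‖C + D₁‖ ≤ ‖C + D‖ for every compact real diagonal D. Then both ‖C + D₁‖ and -‖C + D₁‖ belong to the spectrum of C + D₁. -/
open scoped InnerProductSpace
open ContinuousLinearMap

noncomputable section

variable {H : Type*} [NormedAddCommGroup H] [InnerProductSpace ℂ H] [CompleteSpace H]

/-- The absolute value `|A| = (A^*A)^{1/2}` of an operator. -/
def opAbs (A : H →L[ℂ] H) : H →L[ℂ] H := CFC.sqrt (ContinuousLinearMap.adjoint A * A)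

/-- The trace of an operator computed in the Hilbert basis `e`. -/
def opTrace (e : HilbertBasis ℕ ℂ H) (A : H →L[ℂ] H) : ℂ := ∑' n, ⟪e n, A (e n)⟫_ℂ

/-- The trace norm `‖A‖₁ = tr |A|` computed in the Hilbert basis `e`. -/
def traceNorm (e : HilbertBasis ℕ ℂ H) (A : H →L[ℂ] H) : ℝ :=
  ∑' n, (⟪e n, opAbs A (e n)⟫_ℂ).re

/-- `A` is trace class: the diagonal of `|A|` is summable. -/
def IsTraceClass (e : HilbertBasis ℕ ℂ H) (A : H →L[ℂ] H) : Prop :=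
  Summable fun n => (⟪e n, opAbs A (e n)⟫_ℂ).re

/-- `D` is diagonal in the basis `e` with real diagonal entries. -/
def RealDiag (e : HilbertBasis ℕ ℂ H) (D : H →L[ℂ] H) : Prop :=
  ∀ n, ∃ d : ℝ, D (e n) = (d : ℂ) • e n

/-- Distance from `C` to the compact real diagonal operators, in operator norm. -/
def diagDistK (e : HilbertBasis ℕ ℂ H) (C : H →L[ℂ] H) : ℝ :=
  ⨅ D : {D : H →L[ℂ] H // IsCompactOperator ⇑D ∧ RealDiag e D}, ‖C + (D : H →L[ℂ] H)‖

/-- Positive part `X⁺ = (|X| + X)/2`. -/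
def opPosPart (X : H →L[ℂ] H) : H →L[ℂ] H := (2⁻¹ : ℂ) • (opAbs X + X)

/-- Negative part `X⁻ = (|X| - X)/2`. -/
def opNegPart (X : H →L[ℂ] H) : H →L[ℂ] H := (2⁻¹ : ℂ) • (opAbs X - X)

/-!
Put `T = C + D₁`, a compact self-adjoint operator. If `‖T‖ ∉ σ(T)`, then
`σ(T) ⊆ [-‖T‖, ‖T‖ - δ]` for some `δ > 0`, so `‖T + c‖ < ‖T‖` for `c = δ / 2`. The shift `c` is
not a compact diagonal operator, but `c P` is, for `P` the projection onto finitely many basis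
vectors, and `T + c P = P (T + c) P + P T (1 - P) + (1 - P) T`. Since `T` is compact,
`‖(1 - P) T‖ → 0` as `P → 1` strongly, so `‖T + c P‖ < ‖T‖`, contradicting minimality.
Applied to `-T = -C + (-D₁)` the same argument gives `-‖T‖ ∈ σ(T)`.
-/

open Filter Topology Submodule

section CStarAlgebra

variable {A : Type*} [CStarAlgebra A]

lemma IsStarProjection.norm_add_smul_le {a p : A} (ha : IsSelfAdjoint a)
    (hp : IsStarProjection p) (c : ℝ) :
    ‖a + c • p‖ ≤ ‖a + algebraMap ℝ A c‖ + 2 * ‖(1 - p) * a‖ := by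
  have hdecomp :
      a + c • p = p * (a + algebraMap ℝ A c) * p + p * (a * (1 - p)) + (1 - p) * a := by
    rw [Algebra.algebraMap_eq_smul_one]
    simp only [mul_add, add_mul, mul_sub, sub_mul, mul_one, one_mul, mul_smul_comm,
      smul_mul_assoc, hp.isIdempotentElem.eq, mul_assoc]
    abel
  have hstar : ‖a * (1 - p)‖ = ‖(1 - p) * a‖ := by
    rw [← norm_star, star_mul, ha.star_eq, hp.one_sub.isSelfAdjoint.star_eq]
  have hp1 : ‖p‖ ≤ 1 := hp.norm_le
  calc ‖a + c • p‖
      ≤ ‖p * (a + algebraMap ℝ A c) * p‖ + ‖p * (a * (1 - p))‖ + ‖(1 - p) * a‖ := by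
        rw [hdecomp]; exact norm_add₃_le
    _ ≤ ‖a + algebraMap ℝ A c‖ + ‖(1 - p) * a‖ + ‖(1 - p) * a‖ := by
        gcongr
        · calc ‖p * (a + algebraMap ℝ A c) * p‖
              ≤ ‖p‖ * ‖a + algebraMap ℝ A c‖ * ‖p‖ := norm_mul₃_le
            _ ≤ 1 * ‖a + algebraMap ℝ A c‖ * 1 := by gcongr
            _ = ‖a + algebraMap ℝ A c‖ := by ring
        · exact hstar ▸ (norm_mul_le _ _).trans (mul_le_of_le_one_left (norm_nonneg _) hp1)
    _ = ‖a + algebraMap ℝ A c‖ + 2 * ‖(1 - p) * a‖ := by ring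

variable [PartialOrder A] [StarOrderedRing A] [Nontrivial A]

lemma IsSelfAdjoint.norm_le_of_neg_le_of_le {a : A} (ha : IsSelfAdjoint a) {r : ℝ}
    (hlo : -algebraMap ℝ A r ≤ a) (hhi : a ≤ algebraMap ℝ A r) : ‖a‖ ≤ r := by
  rcases CStarAlgebra.norm_or_neg_norm_mem_spectrum ha with h | h
  · exact (le_algebraMap_iff_spectrum_le (R := ℝ) ha).1 hhi _ h
  · rw [← map_neg] at hlo
    linarith [(algebraMap_le_iff_le_spectrum (R := ℝ) ha).1 hlo _ h]

lemma IsSelfAdjoint.exists_norm_add_algebraMap_lt {a : A} (ha : IsSelfAdjoint a)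
    (h : ‖a‖ ∉ spectrum ℝ a) : ∃ c : ℝ, 0 < c ∧ ‖a + algebraMap ℝ A c‖ < ‖a‖ := by
  obtain ⟨δ, hδ, hball⟩ := Metric.isOpen_iff.1 (spectrum.isClosed (𝕜 := ℝ) a).isOpen_compl _ h
  have hle : ∀ x ∈ spectrum ℝ a, x ≤ ‖a‖ - δ := fun x hx => by
    have hxa : x ≤ ‖a‖ := (Real.le_norm_self x).trans (spectrum.norm_le_norm_of_mem hx)
    by_contra! hlt
    exact hball (by rw [Metric.mem_ball, Real.dist_eq, abs_lt]; constructor <;> linarith) hx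
  have hhi : a ≤ algebraMap ℝ A (‖a‖ - δ) := (le_algebraMap_iff_spectrum_le (R := ℝ) ha).2 hle
  have hlo : -algebraMap ℝ A ‖a‖ ≤ a := ha.neg_algebraMap_norm_le_self
  refine ⟨δ / 2, half_pos hδ, lt_of_le_of_lt (b := ‖a‖ - δ / 2) ?_ (by linarith)⟩
  refine (ha.add (.algebraMap A (.all _))).norm_le_of_neg_le_of_le ?_ ?_
  · calc -algebraMap ℝ A (‖a‖ - δ / 2) = -algebraMap ℝ A ‖a‖ + algebraMap ℝ A (δ / 2) := by
          rw [map_sub]; abel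
      _ ≤ a + algebraMap ℝ A (δ / 2) := by gcongr
  · calc a + algebraMap ℝ A (δ / 2) ≤ algebraMap ℝ A (‖a‖ - δ) + algebraMap ℝ A (δ / 2) := by
          gcongr
      _ = algebraMap ℝ A (‖a‖ - δ / 2) := by rw [← map_add]; ring_nf

end CStarAlgebra

/-- A bounded family converging strongly to `0` converges uniformly on the compact closure of the
image of the unit ball under `T` (Ascoli). -/
theorem IsCompactOperator.tendsto_norm_comp {𝕜 E F G ι : Type*} [RCLike 𝕜]
    [NormedAddCommGroup E] [NormedSpace 𝕜 E] [NormedAddCommGroup F] [NormedSpace 𝕜 F]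
    [NormedAddCommGroup G] [NormedSpace 𝕜 G] {l : Filter ι} {S : ι → F →L[𝕜] G} {M : NNReal}
    (hS : ∀ i, ‖S i‖₊ ≤ M) (hS0 : ∀ y, Tendsto (fun i => S i y) l (𝓝 0))
    {T : E →L[𝕜] F} (hT : IsCompactOperator T) :
    Tendsto (fun i => ‖(S i).comp T‖) l (𝓝 0) := by
  set K := closure (T '' Metric.closedBall 0 1)
  have hK : IsCompact K := hT.isCompact_closure_image_closedBall 1
  have hequi : Equicontinuous fun i => ⇑(S i) :=
    (LipschitzWith.uniformEquicontinuous _ M fun i => (S i).lipschitz.weaken (hS i)).equicontinuous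
  have hunif : TendstoUniformlyOn (fun i => ⇑(S i)) 0 l K := by
    have := (EquicontinuousOn.tendsto_uniformOnFun_iff_pi' (𝔖 := {K}) (by simpa using hK)
      (by simpa using hequi.equicontinuousOn K) l 0).2 (by
        rw [tendsto_pi_nhds]; rintro ⟨y, -⟩; exact hS0 y)
    exact UniformOnFun.tendsto_iff_tendstoUniformlyOn.1 this K rfl
  rw [Metric.tendstoUniformlyOn_iff] at hunif
  rw [Metric.tendsto_nhds]
  intro ε hε
  filter_upwards [hunif (ε / 2) (half_pos hε)] with i hi
  rw [Real.dist_0_eq_abs, abs_norm]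
  refine lt_of_le_of_lt (opNorm_le_of_unit_norm (half_pos hε).le fun x hx => ?_)
    (half_lt_self hε)
  simpa using (hi (T x) (subset_closure ⟨x, by simp [hx], rfl⟩)).le

lemma Submodule.isCompactOperator_starProjection {𝕜 E : Type*} [RCLike 𝕜] [NormedAddCommGroup E]
    [InnerProductSpace 𝕜 E] (K : Submodule 𝕜 E) [FiniteDimensional 𝕜 K] :
    IsCompactOperator K.starProjection :=
  (isCompactOperator_of_locallyCompactSpace_dom K.orthogonalProjectionOnto).clm_comp K.subtypeL

instance FiniteDimensional.span_image_finset {K V ι : Type*} [DivisionRing K] [AddCommGroup V]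
    [Module K V] (v : ι → V) (s : Finset ι) : FiniteDimensional K (span K (v '' s)) :=
  FiniteDimensional.span_of_finite K (s.finite_toSet.image v)

namespace HilbertBasis

variable {ι 𝕜 E : Type*} [RCLike 𝕜] [NormedAddCommGroup E] [InnerProductSpace 𝕜 E]
  (e : HilbertBasis ι 𝕜 E)

lemma ext_inner {x y : E} (h : ∀ i, ⟪e i, x⟫_𝕜 = ⟪e i, y⟫_𝕜) : x = y :=
  e.repr.injective <| lp.ext <| funext fun i => by simp only [e.repr_apply_apply, h]

lemma starProjection_span_image_apply (s : Set ι) [(span 𝕜 (e '' s)).HasOrthogonalProjection]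
    (i : ι) [Decidable (i ∈ s)] :
    (span 𝕜 (e '' s)).starProjection (e i) = if i ∈ s then e i else 0 := by
  split_ifs with hi
  · exact starProjection_eq_self_iff.2 (subset_span ⟨i, hi, rfl⟩)
  · refine (starProjection_apply_eq_zero_iff _).2 ?_
    have : span 𝕜 {e i} ⟂ span 𝕜 (e '' s) := isOrtho_span.2 <| by
      rintro _ rfl _ ⟨j, hj, rfl⟩
      exact e.orthonormal.2 fun hij => hi (hij ▸ hj)
    exact this (mem_span_singleton_self _)

lemma tendsto_starProjection_span_finset (x : E) :
    Tendsto (fun s : Finset ι => (span 𝕜 (e '' s)).starProjection x) atTop (𝓝 x) := by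
  refine starProjection_tendsto_self (fun s : Finset ι => span 𝕜 (e '' s))
    (fun s t hst => span_mono (Set.image_mono hst)) x ?_
  rw [← e.dense_span]
  refine topologicalClosure_mono (span_le.2 ?_)
  rintro _ ⟨i, rfl⟩
  exact mem_iSup_of_mem {i} (subset_span ⟨i, by simp, rfl⟩)

lemma tendsto_norm_one_sub_starProjection_mul [CompleteSpace E] {T : E →L[𝕜] E} (hT : IsCompactOperator T) :
    Tendsto (fun s : Finset ι => ‖(1 - (span 𝕜 (e '' s)).starProjection) * T‖) atTop (𝓝 0) := by
  refine IsCompactOperator.tendsto_norm_comp (M := 1) (fun s => ?_) (fun y => ?_) hT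
  · rw [← NNReal.coe_le_coe, coe_nnnorm, NNReal.coe_one]
    exact isStarProjection_starProjection.one_sub.norm_le
  · simpa using (tendsto_const_nhds (x := y)).sub (e.tendsto_starProjection_span_finset y)

end HilbertBasis

namespace RealDiag

variable {E : Type*} [NormedAddCommGroup E] [InnerProductSpace ℂ E] {e : HilbertBasis ℕ ℂ E}
  {D D' : E →L[ℂ] E}

lemma isSelfAdjoint [CompleteSpace E] (hD : RealDiag e D) : IsSelfAdjoint D := by
  rw [isSelfAdjoint_iff']
  refine ext_on (dense_iff_topologicalClosure_eq_top.2 e.dense_span) ?_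
  rintro _ ⟨i, rfl⟩
  refine e.ext_inner fun j => ?_
  obtain ⟨di, hi⟩ := hD i
  rw [adjoint_inner_right]
  rcases eq_or_ne j i with rfl | hji
  · rw [hi, inner_smul_left, inner_smul_right, Complex.conj_ofReal]
  · obtain ⟨dj, hj⟩ := hD j
    rw [hi, hj, inner_smul_left, inner_smul_right, e.orthonormal.2 hji, mul_zero, mul_zero]

lemma add (hD : RealDiag e D) (hD' : RealDiag e D') : RealDiag e (D + D') := fun n => by
  obtain ⟨d, hd⟩ := hD n
  obtain ⟨d', hd'⟩ := hD' n
  exact ⟨d + d', by simp [hd, hd', add_smul]⟩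

lemma neg (hD : RealDiag e D) : RealDiag e (-D) := fun n => by
  obtain ⟨d, hd⟩ := hD n
  exact ⟨-d, by simp [hd]⟩

lemma smul (c : ℝ) (hD : RealDiag e D) : RealDiag e (c • D) := fun n => by
  obtain ⟨d, hd⟩ := hD n
  exact ⟨c * d, by simp [hd, smul_smul, ← Complex.coe_smul]⟩

lemma starProjection_span_image (e : HilbertBasis ℕ ℂ E) (s : Set ℕ)
    [(span ℂ (e '' s)).HasOrthogonalProjection] :
    RealDiag e (span ℂ (e '' s)).starProjection := fun n => by
  classical
  exact ⟨if n ∈ s then 1 else 0, by rw [e.starProjection_span_image_apply]; split_ifs <;> simp⟩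

end RealDiag

theorem norm_mem_spectrum_of_forall_norm_le_norm_add [Nontrivial H] (e : HilbertBasis ℕ ℂ H)
    {T : H →L[ℂ] H} (hTc : IsCompactOperator T) (hTsa : IsSelfAdjoint T)
    (hmin : ∀ D : H →L[ℂ] H, IsCompactOperator D → RealDiag e D → ‖T‖ ≤ ‖T + D‖) :
    (‖T‖ : ℂ) ∈ spectrum ℂ T := by
  by_contra hnot
  obtain ⟨c, -, hlt⟩ :=
    hTsa.exists_norm_add_algebraMap_lt fun h => hnot (spectrum.algebraMap_mem ℂ h)
  obtain ⟨s, hs⟩ := ((e.tendsto_norm_one_sub_starProjection_mul hTc).eventually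
    (gt_mem_nhds (half_pos (sub_pos.2 hlt)))).exists
  set P := (span ℂ (e '' s)).starProjection
  have hPc : IsCompactOperator (c • P) := (isCompactOperator_starProjection _).smul c
  have hmin' := hmin (c • P) hPc ((RealDiag.starProjection_span_image e s).smul c)
  have hsplit := (isStarProjection_starProjection (U := span ℂ (e '' s))).norm_add_smul_le hTsa c
  linarith

/-- balanced spectrum property: if `C + D₁` is minimal then
`±‖C + D₁‖ ∈ σ(C + D₁)`. -/
theorem stmt_11 (e : HilbertBasis ℕ ℂ H) (C D₁ : H →L[ℂ] H)
    (hcomp : IsCompactOperator ⇑C) (hsa : IsSelfAdjoint C) (hC : C ≠ 0)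
    (hD₁c : IsCompactOperator ⇑D₁) (hD₁ : RealDiag e D₁)
    (hmin : ∀ D : H →L[ℂ] H, IsCompactOperator ⇑D → RealDiag e D →
      ‖C + D₁‖ ≤ ‖C + D‖) :
    ((‖C + D₁‖ : ℂ) ∈ spectrum ℂ (C + D₁)) ∧
    ((-(‖C + D₁‖ : ℝ) : ℂ) ∈ spectrum ℂ (C + D₁)) := by
  have : Nontrivial H := by
    obtain ⟨x, hx⟩ := exists_ne_zero hC
    exact nontrivial_of_ne x 0 fun h => hx (by simp [h])
  have hTc : IsCompactOperator (C + D₁) := hcomp.add hD₁c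
  have hTsa : IsSelfAdjoint (C + D₁) := hsa.add hD₁.isSelfAdjoint
  have hTmin : ∀ D : H →L[ℂ] H, IsCompactOperator D → RealDiag e D →
      ‖C + D₁‖ ≤ ‖C + D₁ + D‖ := fun D hDc hD => by
    simpa only [add_assoc] using hmin (D₁ + D) (hD₁c.add hDc) (hD₁.add hD)
  refine ⟨norm_mem_spectrum_of_forall_norm_le_norm_add e hTc hTsa hTmin, ?_⟩
  have hneg := norm_mem_spectrum_of_forall_norm_le_norm_add e (T := -(C + D₁)) hTc.neg hTsa.neg
    fun D hDc hD => by
      rw [norm_neg, ← norm_neg (-(C + D₁) + D), neg_add, neg_neg]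
      exact hTmin (-D) hDc.neg hD.neg
  rw [norm_neg, ← spectrum.neg_eq, Set.mem_neg] at hneg
  exact_mod_cast hneg
end
end

section
/- Let C be a compact Hermitian operator and D₁ a compact real diagonal operator on a separable Hilbert space. Suppose there exists a nonzero Hermitian trace-class operator X with ⟨X e_n, e_n⟩ = 0 for all n, |tr(X(C+D₁))| = ‖C+D₁‖·‖X‖₁, and E₊X⁺ = X⁺, E₋X⁻ = X⁻ where E₊, E₋ are the spectral projections onto the maximal and minimal eigenvalues of C+D₁. Then C+D₁ is minimal: ‖C+D₁‖ ≤ ‖C+D‖ for all compact real diagonal D. -/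
open scoped InnerProductSpace
open ContinuousLinearMap

noncomputable section

variable {H : Type*} [NormedAddCommGroup H] [InnerProductSpace ℂ H] [CompleteSpace H]

/-!
Trace duality. For a positive trace-class `P` with square root `S`, the diagonal entries of `P A`
are `⟪S eₙ, S (A eₙ)⟫`, and the Hilbert–Schmidt bound `∑ ‖S A eₙ‖² ≤ ‖A‖² ∑ ‖S eₙ‖²` (obtained
from `∑ ‖T eₙ‖² = ∑ ‖T* eₙ‖²`) together with AM-GM gives `|tr (P A)| ≤ ‖A‖ ‖P‖₁`. Splitting a
self-adjoint `X` as `X⁺ - X⁻` with `‖X⁺‖₁ + ‖X⁻‖₁ = ‖X‖₁` yields `|tr (X A)| ≤ ‖A‖ ‖X‖₁`.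
Since `X` has zero diagonal, `tr (X (C + D))` does not depend on the diagonal operator `D`, so
`‖C + D₁‖ ‖X‖₁ = |tr (X (C + D))| ≤ ‖C + D‖ ‖X‖₁`, and `‖X‖₁ > 0` because `X ≠ 0`.
-/

namespace HilbertBasis

variable {ι 𝕜 E : Type*} [RCLike 𝕜] [NormedAddCommGroup E] [InnerProductSpace 𝕜 E]

theorem ext_continuousLinearMap {F : Type*} [NormedAddCommGroup F] [NormedSpace 𝕜 F]
    (b : HilbertBasis ι 𝕜 E) {T U : E →L[𝕜] F} (h : ∀ i, T (b i) = U (b i)) : T = U :=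
  ext_on (Submodule.dense_iff_topologicalClosure_eq_top.mpr b.dense_span)
    (by rintro _ ⟨i, rfl⟩; exact h i)

theorem tsum_enorm_inner_sq (b : HilbertBasis ι 𝕜 E) (x : E) :
    ∑' i, ‖⟪b i, x⟫_𝕜‖ₑ ^ 2 = ‖x‖ₑ ^ 2 := by
  have h := lp.hasSum_norm (p := 2) (by norm_num) (b.repr x)
  simp only [b.repr_apply_apply, b.repr.norm_map, ENNReal.toReal_ofNat, Real.rpow_two] at h
  rw [← ofReal_norm, ← ENNReal.ofReal_pow (norm_nonneg _), ← h.tsum_eq,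
    ENNReal.ofReal_tsum_of_nonneg (fun _ => by positivity) h.summable]
  simp

variable [CompleteSpace E]

theorem tsum_enorm_sq_adjoint_apply (b : HilbertBasis ι 𝕜 E) (T : E →L[𝕜] E) :
    ∑' i, ‖adjoint T (b i)‖ₑ ^ 2 = ∑' i, ‖T (b i)‖ₑ ^ 2 := by
  calc ∑' i, ‖adjoint T (b i)‖ₑ ^ 2 = ∑' i, ∑' j, ‖⟪b j, adjoint T (b i)⟫_𝕜‖ₑ ^ 2 := by
        simp only [tsum_enorm_inner_sq]
    _ = ∑' j, ∑' i, ‖⟪b i, T (b j)⟫_𝕜‖ₑ ^ 2 := by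
        rw [ENNReal.tsum_comm]
        congr! 4 with j i
        rw [adjoint_inner_right, ← inner_conj_symm, RCLike.enorm_conj]
    _ = ∑' j, ‖T (b j)‖ₑ ^ 2 := by simp only [tsum_enorm_inner_sq]

theorem tsum_enorm_sq_mul_apply_le (b : HilbertBasis ι 𝕜 E) (T A : E →L[𝕜] E) :
    ∑' i, ‖(T * A) (b i)‖ₑ ^ 2 ≤ ‖A‖ₑ ^ 2 * ∑' i, ‖adjoint T (b i)‖ₑ ^ 2 := by
  rw [← tsum_enorm_sq_adjoint_apply, ← ENNReal.tsum_mul_left]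
  refine ENNReal.tsum_le_tsum fun i => ?_
  rw [← mul_pow, mul_def, adjoint_comp]
  gcongr
  simpa only [LinearIsometryEquiv.enorm_map, comp_apply] using
    (adjoint A).le_opENorm (adjoint T (b i))

theorem summable_and_tsum_norm_sq_mul_apply_le (b : HilbertBasis ι 𝕜 E) {T : E →L[𝕜] E}
    (hT : Summable fun i => ‖adjoint T (b i)‖ ^ 2) (A : E →L[𝕜] E) :
    Summable (fun i => ‖(T * A) (b i)‖ ^ 2) ∧
      ∑' i, ‖(T * A) (b i)‖ ^ 2 ≤ ‖A‖ ^ 2 * ∑' i, ‖adjoint T (b i)‖ ^ 2 := by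
  have hT' : Summable fun i => ‖adjoint T (b i)‖₊ ^ 2 := by
    simpa only [← NNReal.summable_coe, NNReal.coe_pow, coe_nnnorm] using hT
  have h := b.tsum_enorm_sq_mul_apply_le T A
  simp only [enorm_eq_nnnorm, ← ENNReal.coe_pow, ← ENNReal.coe_tsum hT', ← ENNReal.coe_mul] at h
  have hsum : Summable fun i => ‖(T * A) (b i)‖₊ ^ 2 :=
    ENNReal.tsum_coe_ne_top_iff_summable.mp (ne_top_of_le_ne_top ENNReal.coe_ne_top h)
  rw [← ENNReal.coe_tsum hsum, ENNReal.coe_le_coe, ← NNReal.coe_le_coe] at h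
  push_cast [NNReal.coe_tsum] at h
  exact ⟨by simpa only [← NNReal.summable_coe, NNReal.coe_pow, coe_nnnorm] using hsum, h⟩

end HilbertBasis

section PositiveOperators

variable {P Q : H →L[ℂ] H}

theorem inner_apply_eq_inner_sqrt_apply (hP : 0 ≤ P) (x y : H) :
    ⟪x, P y⟫_ℂ = ⟪CFC.sqrt P x, CFC.sqrt P y⟫_ℂ := by
  conv_lhs => rw [← CFC.sqrt_mul_sqrt_self P hP]
  rw [mul_apply_eq_comp, ← adjoint_inner_left, (CFC.sqrt_nonneg P).isSelfAdjoint.adjoint_eq]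

theorem re_inner_apply_self_eq_norm_sqrt_sq (hP : 0 ≤ P) (x : H) :
    (⟪x, P x⟫_ℂ).re = ‖CFC.sqrt P x‖ ^ 2 := by
  rw [inner_apply_eq_inner_sqrt_apply hP, ← inner_self_eq_norm_sq (𝕜 := ℂ)]
  rfl

theorem re_inner_apply_self_le_of_le (hPQ : P ≤ Q) (x : H) :
    (⟪x, P x⟫_ℂ).re ≤ (⟪x, Q x⟫_ℂ).re := by
  have h := ((Q - P).nonneg_iff_isPositive.mp (sub_nonneg.mpr hPQ)).re_inner_nonneg_right x
  simpa only [sub_apply, inner_sub_right, map_sub, sub_nonneg, RCLike.re_to_complex] using h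

theorem opAbs_eq_abs (X : H →L[ℂ] H) : opAbs X = CFC.abs X := rfl

theorem opAbs_nonneg (X : H →L[ℂ] H) : 0 ≤ opAbs X := CFC.abs_nonneg X

theorem opAbs_of_nonneg (hP : 0 ≤ P) : opAbs P = P := CFC.abs_of_nonneg P hP

end PositiveOperators

section Trace

variable (e : HilbertBasis ℕ ℂ H) {P Q X : H →L[ℂ] H}

theorem traceNorm_eq_tsum_norm_sq (X : H →L[ℂ] H) :
    traceNorm e X = ∑' n, ‖CFC.sqrt (opAbs X) (e n)‖ ^ 2 :=
  tsum_congr fun n => re_inner_apply_self_eq_norm_sqrt_sq (opAbs_nonneg X) (e n)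

theorem isTraceClass_iff_summable_norm_sq (X : H →L[ℂ] H) :
    IsTraceClass e X ↔ Summable fun n => ‖CFC.sqrt (opAbs X) (e n)‖ ^ 2 := by
  simp only [IsTraceClass, re_inner_apply_self_eq_norm_sqrt_sq (opAbs_nonneg X)]

theorem IsTraceClass.of_nonneg_of_le (hP : 0 ≤ P) (hPQ : P ≤ Q) (hQ : IsTraceClass e Q) :
    IsTraceClass e P := by
  unfold IsTraceClass at hQ ⊢
  rw [opAbs_of_nonneg (hP.trans hPQ)] at hQ
  rw [opAbs_of_nonneg hP]
  exact hQ.of_nonneg_of_le (fun n => (P.nonneg_iff_isPositive.mp hP).re_inner_nonneg_right (e n))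
    (fun n => re_inner_apply_self_le_of_le hPQ (e n))

theorem traceNorm_add_of_nonneg (hP : 0 ≤ P) (hQ : 0 ≤ Q) (hPtc : IsTraceClass e P)
    (hQtc : IsTraceClass e Q) : traceNorm e (P + Q) = traceNorm e P + traceNorm e Q := by
  unfold IsTraceClass at hPtc hQtc
  unfold traceNorm
  rw [opAbs_of_nonneg hP] at hPtc ⊢
  rw [opAbs_of_nonneg hQ] at hQtc ⊢
  rw [opAbs_of_nonneg (add_nonneg hP hQ), ← hPtc.tsum_add hQtc]
  simp only [add_apply, inner_add_right, Complex.add_re]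

theorem traceNorm_pos (hX : IsTraceClass e X) (hX0 : X ≠ 0) : 0 < traceNorm e X := by
  rw [isTraceClass_iff_summable_norm_sq] at hX
  rw [traceNorm_eq_tsum_norm_sq]
  refine (tsum_nonneg fun n => sq_nonneg _).lt_of_ne fun h => hX0 ?_
  have hsqrt : CFC.sqrt (opAbs X) = 0 := e.ext_continuousLinearMap fun n => by
    have hterms := (hasSum_zero_iff_of_nonneg fun n => sq_nonneg _).mp (h ▸ hX.hasSum)
    simpa using congrFun hterms n
  rwa [CFC.sqrt_eq_zero_iff _ (opAbs_nonneg X), opAbs_eq_abs, CFC.abs_eq_zero_iff] at hsqrt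

theorem summable_and_tsum_norm_inner_mul_apply_le (hP : 0 ≤ P) (hPtc : IsTraceClass e P)
    (A : H →L[ℂ] H) :
    Summable (fun n => ‖⟪e n, (P * A) (e n)⟫_ℂ‖) ∧
      ∑' n, ‖⟪e n, (P * A) (e n)⟫_ℂ‖ ≤ ‖A‖ * traceNorm e P := by
  rcases (norm_nonneg A).eq_or_lt with hA | hA
  · obtain rfl : A = 0 := norm_eq_zero.mp hA.symm
    simp
  set S := CFC.sqrt P
  have hSadj : adjoint S = S := (CFC.sqrt_nonneg P).isSelfAdjoint.adjoint_eq
  rw [isTraceClass_iff_summable_norm_sq, opAbs_of_nonneg hP] at hPtc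
  rw [traceNorm_eq_tsum_norm_sq, opAbs_of_nonneg hP]
  obtain ⟨hSA, hSA_le⟩ := e.summable_and_tsum_norm_sq_mul_apply_le (T := S) (by rwa [hSadj]) A
  rw [hSadj] at hSA_le
  set c := ‖A‖
  have amgm (u v : ℝ) : u * v ≤ (c * u ^ 2 + v ^ 2 / c) / 2 := by
    rw [add_div' _ _ _ hA.ne', div_div, le_div_iff₀ (by positivity)]
    nlinarith [sq_nonneg (c * u - v)]
  have hterm : ∀ n, ‖⟪e n, (P * A) (e n)⟫_ℂ‖ ≤
      (c * ‖S (e n)‖ ^ 2 + ‖(S * A) (e n)‖ ^ 2 / c) / 2 := fun n => by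
    rw [mul_apply_eq_comp, inner_apply_eq_inner_sqrt_apply hP]
    exact (norm_inner_le_norm _ _).trans (amgm _ _)
  have hmaj := ((hPtc.mul_left c).add (hSA.div_const c)).div_const 2
  refine ⟨.of_nonneg_of_le (fun _ => norm_nonneg _) hterm hmaj, ?_⟩
  calc ∑' n, ‖⟪e n, (P * A) (e n)⟫_ℂ‖
      ≤ ∑' n, (c * ‖S (e n)‖ ^ 2 + ‖(S * A) (e n)‖ ^ 2 / c) / 2 :=
        (Summable.of_nonneg_of_le (fun _ => norm_nonneg _) hterm hmaj).tsum_le_tsum hterm hmaj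
    _ = (c * ∑' n, ‖S (e n)‖ ^ 2 + (∑' n, ‖(S * A) (e n)‖ ^ 2) / c) / 2 := by
        rw [tsum_div_const, (hPtc.mul_left c).tsum_add (hSA.div_const c), tsum_mul_left,
          tsum_div_const]
    _ ≤ (c * ∑' n, ‖S (e n)‖ ^ 2 + c ^ 2 * (∑' n, ‖S (e n)‖ ^ 2) / c) / 2 := by gcongr
    _ = c * ∑' n, ‖S (e n)‖ ^ 2 := by field_simp; ring

theorem summable_inner_mul_apply_of_nonneg (hP : 0 ≤ P) (hPtc : IsTraceClass e P)
    (A : H →L[ℂ] H) : Summable fun n => ⟪e n, (P * A) (e n)⟫_ℂ :=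
  (summable_and_tsum_norm_inner_mul_apply_le e hP hPtc A).1.of_norm

theorem norm_opTrace_mul_le_of_nonneg (hP : 0 ≤ P) (hPtc : IsTraceClass e P)
    (A : H →L[ℂ] H) : ‖opTrace e (P * A)‖ ≤ ‖A‖ * traceNorm e P :=
  have h := summable_and_tsum_norm_inner_mul_apply_le e hP hPtc A
  (norm_tsum_le_tsum_norm h.1).trans h.2

theorem traceNorm_opAbs (X : H →L[ℂ] H) : traceNorm e (opAbs X) = traceNorm e X := by
  rw [traceNorm, traceNorm, opAbs_of_nonneg (opAbs_nonneg X)]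

theorem isTraceClass_opAbs (hX : IsTraceClass e X) : IsTraceClass e (opAbs X) := by
  rwa [IsTraceClass, opAbs_of_nonneg (opAbs_nonneg X)]

theorem posPart_add_negPart_eq_opAbs (hX : IsSelfAdjoint X) : X⁺ + X⁻ = opAbs X :=
  CFC.posPart_add_negPart X hX

theorem IsTraceClass.posPart (htc : IsTraceClass e X) (hX : IsSelfAdjoint X) :
    IsTraceClass e X⁺ :=
  (isTraceClass_opAbs e htc).of_nonneg_of_le e (CFC.posPart_nonneg X)
    (posPart_add_negPart_eq_opAbs hX ▸ le_add_of_nonneg_right (CFC.negPart_nonneg X))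

theorem IsTraceClass.negPart (htc : IsTraceClass e X) (hX : IsSelfAdjoint X) :
    IsTraceClass e X⁻ :=
  (isTraceClass_opAbs e htc).of_nonneg_of_le e (CFC.negPart_nonneg X)
    (posPart_add_negPart_eq_opAbs hX ▸ le_add_of_nonneg_left (CFC.posPart_nonneg X))

theorem traceNorm_posPart_add_traceNorm_negPart (htc : IsTraceClass e X)
    (hX : IsSelfAdjoint X) : traceNorm e X⁺ + traceNorm e X⁻ = traceNorm e X := by
  rw [← traceNorm_add_of_nonneg e (CFC.posPart_nonneg X) (CFC.negPart_nonneg X)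
    (htc.posPart e hX) (htc.negPart e hX), posPart_add_negPart_eq_opAbs hX, traceNorm_opAbs]

theorem norm_opTrace_mul_le (htc : IsTraceClass e X) (hX : IsSelfAdjoint X) (A : H →L[ℂ] H) :
    ‖opTrace e (X * A)‖ ≤ ‖A‖ * traceNorm e X := by
  have hpos := htc.posPart e hX
  have hneg := htc.negPart e hX
  have hsplit : opTrace e (X * A) = opTrace e (X⁺ * A) - opTrace e (X⁻ * A) := by
    conv_lhs => rw [← CFC.posPart_sub_negPart X hX]
    simp only [opTrace, sub_mul, sub_apply, inner_sub_right]
    exact (summable_inner_mul_apply_of_nonneg e (CFC.posPart_nonneg X) hpos A).tsum_sub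
      (summable_inner_mul_apply_of_nonneg e (CFC.negPart_nonneg X) hneg A)
  calc ‖opTrace e (X * A)‖ ≤ ‖opTrace e (X⁺ * A)‖ + ‖opTrace e (X⁻ * A)‖ :=
        hsplit ▸ norm_sub_le _ _
    _ ≤ ‖A‖ * traceNorm e X⁺ + ‖A‖ * traceNorm e X⁻ :=
        add_le_add (norm_opTrace_mul_le_of_nonneg e (CFC.posPart_nonneg X) hpos A)
          (norm_opTrace_mul_le_of_nonneg e (CFC.negPart_nonneg X) hneg A)
    _ = ‖A‖ * traceNorm e X := by
        rw [← mul_add, traceNorm_posPart_add_traceNorm_negPart e htc hX]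

end Trace

theorem opTrace_mul_add_of_realDiag {E : Type*} [NormedAddCommGroup E] [InnerProductSpace ℂ E]
    (e : HilbertBasis ℕ ℂ E) {X D : E →L[ℂ] E} (hX : ∀ n, ⟪e n, X (e n)⟫_ℂ = 0)
    (hD : RealDiag e D) (A : E →L[ℂ] E) :
    opTrace e (X * (A + D)) = opTrace e (X * A) :=
  tsum_congr fun n => by
    obtain ⟨d, hd⟩ := hD n
    simp only [mul_add, add_apply, mul_apply_eq_comp, hd, map_smul, inner_add_right,
      inner_smul_right, hX n, mul_zero, add_zero]

theorem stmt_13_general (e : HilbertBasis ℕ ℂ H) (C D₁ : H →L[ℂ] H)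
    (hD₁ : RealDiag e D₁)
    (X : H →L[ℂ] H) (hX : X ≠ 0) (hXsa : IsSelfAdjoint X) (hXtc : IsTraceClass e X)
    (hXdiag : ∀ n, ⟪e n, X (e n)⟫_ℂ = 0)
    (htr : ‖opTrace e (X * (C + D₁))‖ = ‖C + D₁‖ * traceNorm e X) :
    ∀ D : H →L[ℂ] H, IsCompactOperator ⇑D → RealDiag e D → ‖C + D₁‖ ≤ ‖C + D‖ := by
  intro D _ hD
  have hbound := norm_opTrace_mul_le e hXtc hXsa (C + D)
  rw [opTrace_mul_add_of_realDiag e hXdiag hD,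
    ← opTrace_mul_add_of_realDiag e hXdiag hD₁, htr] at hbound
  exact le_of_mul_le_mul_right hbound (traceNorm_pos e hXtc hX)

/-- the existence of a functional witness `X` implies minimality of
`C + D₁` with respect to compact real diagonal perturbations. -/
theorem stmt_13 (e : HilbertBasis ℕ ℂ H) (C D₁ : H →L[ℂ] H)
    (hcomp : IsCompactOperator ⇑C) (hsa : IsSelfAdjoint C)
    (hD₁c : IsCompactOperator ⇑D₁) (hD₁ : RealDiag e D₁)
    (Ep Em : H →L[ℂ] H)
    (hEpsa : IsSelfAdjoint Ep) (hEpidem : Ep * Ep = Ep)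
    (hEp : ∀ x : H, Ep x = x ↔ (C + D₁) x = ((sSup (spectrum ℝ (C + D₁)) : ℝ) : ℂ) • x)
    (hEmsa : IsSelfAdjoint Em) (hEmidem : Em * Em = Em)
    (hEm : ∀ x : H, Em x = x ↔ (C + D₁) x = ((sInf (spectrum ℝ (C + D₁)) : ℝ) : ℂ) • x)
    (X : H →L[ℂ] H) (hX : X ≠ 0) (hXsa : IsSelfAdjoint X) (hXtc : IsTraceClass e X)
    (hXdiag : ∀ n, ⟪e n, X (e n)⟫_ℂ = 0)
    (htr : ‖opTrace e (X * (C + D₁))‖ = ‖C + D₁‖ * traceNorm e X)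
    (hXp : Ep * opPosPart X = opPosPart X) (hXm : Em * opNegPart X = opNegPart X) :
    ∀ D : H →L[ℂ] H, IsCompactOperator ⇑D → RealDiag e D → ‖C + D₁‖ ≤ ‖C + D‖ :=
  stmt_13_general e C D₁ hD₁ X hX hXsa hXtc hXdiag htr
end
end

section
/- Let A be a compact Hermitian operator on a separable Hilbert space with λ_max(A) = -λ_min(A) = ‖A‖ > 0, and let E₊, E₋ be the finite-rank spectral projections of λ_max(A) and λ_min(A). Suppose there is a nonzero Hermitian trace-class X with zero diagonal, E₊X⁺ = X⁺, E₋X⁻ = X⁻, and tr(XA) = ‖A‖‖X‖₁. Then for every compact real diagonal operator D there exist unit vectors y ∈ ran(E₊) and z ∈ ran(E₋) with ⟨Dy, y⟩ ≤ ⟨Dz, z⟩. -/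
open scoped InnerProductSpace
open ContinuousLinearMap

noncomputable section

variable {H : Type*} [NormedAddCommGroup H] [InnerProductSpace ℂ H] [CompleteSpace H]

/-!
Because `X = X⁺ - X⁻` has zero diagonal, `X⁺` and `X⁻` have the same diagonal, so
`tr X⁺ = tr X⁻` and `tr (D X⁺) = tr (D X⁻)` for every diagonal `D`. The positive operator `X⁺`
maps into the finite-dimensional space `ran E₊`, hence `X⁺ = ∑ μᵢ vᵢvᵢ*` with `μᵢ ≥ 0` and unit
vectors `vᵢ ∈ ran E₊`, and then `tr (D X⁺) = ∑ μᵢ ⟪vᵢ, D vᵢ⟫`; likewise `X⁻ = ∑ νⱼ wⱼwⱼ*` inside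
`ran E₋`. So a weighted average of the `⟪vᵢ, D vᵢ⟫` equals a weighted average of the
`⟪wⱼ, D wⱼ⟫` with the same total weight `tr X⁺`, which is positive as `X ≠ 0`; hence the
smallest of the former is at most the largest of the latter.
-/

open InnerProductSpace

theorem opAbs_eq_posPart_add_negPart {X : H →L[ℂ] H} (hX : IsSelfAdjoint X) :
    opAbs X = X⁺ + X⁻ := by
  refine CFC.sqrt_unique ?_ (add_nonneg (CFC.posPart_nonneg X) (CFC.negPart_nonneg X))
  rw [← star_eq_adjoint, hX.star_eq]
  conv_rhs => rw [← CFC.posPart_sub_negPart X hX]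
  simp only [mul_add, add_mul, mul_sub, sub_mul, CFC.posPart_mul_negPart,
    CFC.negPart_mul_posPart]
  abel

theorem opPosPart_eq_posPart {X : H →L[ℂ] H} (hX : IsSelfAdjoint X) : opPosPart X = X⁺ := by
  have h : (2⁻¹ : ℂ) • (X⁺ + X⁻ + (X⁺ - X⁻)) = X⁺ := by module
  rwa [CFC.posPart_sub_negPart X hX, ← opAbs_eq_posPart_add_negPart hX] at h

theorem opNegPart_eq_negPart {X : H →L[ℂ] H} (hX : IsSelfAdjoint X) : opNegPart X = X⁻ := by
  have h : (2⁻¹ : ℂ) • (X⁺ + X⁻ - (X⁺ - X⁻)) = X⁻ := by module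
  rwa [CFC.posPart_sub_negPart X hX, ← opAbs_eq_posPart_add_negPart hX] at h

theorem IsSelfAdjoint.exists_eq_sum_rankOne {P : H →L[ℂ] H} (hP : IsSelfAdjoint P)
    {V : Submodule ℂ H} [FiniteDimensional ℂ V] (hPV : ∀ x, P x ∈ V) :
    ∃ (k : ℕ) (v : Fin k → H) (μ : Fin k → ℝ), (∀ i, v i ∈ V) ∧ (∀ i, ‖v i‖ = 1) ∧
      (∀ i, P (v i) = (μ i : ℂ) • v i) ∧ P = ∑ i, (μ i : ℂ) • rankOne ℂ (v i) (v i) := by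
  have hsymm : ∀ x y, ⟪P x, y⟫_ℂ = ⟪x, P y⟫_ℂ := hP.isSymmetric
  let T : V →ₗ[ℂ] V := (P : H →ₗ[ℂ] H).restrict fun x _ => hPV x
  have hT : T.IsSymmetric := fun u w => hsymm u w
  let b := hT.eigenvectorBasis rfl
  have heig : ∀ i, P (b i) = (hT.eigenvalues rfl i : ℂ) • (b i : H) := fun i =>
    congrArg Subtype.val (hT.apply_eigenvectorBasis rfl i)
  refine ⟨_, fun i => b i, hT.eigenvalues rfl, fun i => (b i).2, fun i => b.orthonormal.1 i,
    heig, ?_⟩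
  ext x
  have hx : P x = ∑ i, ⟪(b i : H), P x⟫_ℂ • (b i : H) := by
    simpa using (congrArg Subtype.val (b.sum_repr' ⟨P x, hPV x⟩)).symm
  rw [hx, sum_apply]
  refine Finset.sum_congr rfl fun i _ => ?_
  rw [← hsymm, heig, inner_smul_left, Complex.conj_ofReal, smul_apply, rankOne_apply, smul_smul]

omit [CompleteSpace H] in
theorem eigenvalue_nonneg_of_nonneg_of_apply_eq {P : H →L[ℂ] H} (hP : 0 ≤ P) {v : H}
    (hv : ‖v‖ = 1) {μ : ℝ} (hμ : P v = (μ : ℂ) • v) : 0 ≤ μ := by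
  have h := ((nonneg_iff_isPositive P).mp hP).re_inner_nonneg_right v
  rw [hμ, inner_smul_right, inner_self_eq_norm_sq_to_K, hv] at h
  simpa using h

theorem exists_nonneg_eq_sum_rankOne_of_mul_eq {E P : H →L[ℂ] H} (hE : E * E = E)
    (hfin : FiniteDimensional ℂ (LinearMap.range (E : H →ₗ[ℂ] H))) (hP : 0 ≤ P)
    (hEP : E * P = P) :
    ∃ (k : ℕ) (v : Fin k → H) (μ : Fin k → ℝ), (∀ i, E (v i) = v i) ∧ (∀ i, ‖v i‖ = 1) ∧
      (∀ i, 0 ≤ μ i) ∧ P = ∑ i, (μ i : ℂ) • rankOne ℂ (v i) (v i) := by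
  obtain ⟨k, v, μ, hvE, hvn, heig, hexp⟩ := hP.isSelfAdjoint.exists_eq_sum_rankOne
    fun x => LinearMap.mem_range.mpr ⟨P x, congr($hEP x)⟩
  have hEv : ∀ i, E (v i) = v i := fun i => by
    obtain ⟨u, hu⟩ := LinearMap.mem_range.mp (hvE i)
    rw [← hu]
    exact congr($hE u)
  exact ⟨k, v, μ, hEv, hvn,
    fun i => eigenvalue_nonneg_of_nonneg_of_apply_eq hP (hvn i) (heig i), hexp⟩

section Diagonal

omit [CompleteSpace H]

variable (e : HilbertBasis ℕ ℂ H) {D : H →L[ℂ] H} {d : ℕ → ℝ}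

theorem inner_basis_apply_of_diag (hd : ∀ n, D (e n) = (d n : ℂ) • e n) (m : ℕ) (x : H) :
    ⟪e m, D x⟫_ℂ = d m * ⟪e m, x⟫_ℂ := by
  have h := ((e.hasSum_repr x).mapL D).mapL (innerSL ℂ (e m))
  refine h.unique ((hasSum_single m fun n hn => ?_).trans_eq ?_)
  · simp [hd, e.orthonormal.2 (Ne.symm hn)]
  · simp [hd, e.repr_apply_apply, inner_self_eq_norm_sq_to_K, e.orthonormal.1 m, mul_comm]

variable {ι : Type*} [Fintype ι] (v : ι → H) (μ : ι → ℝ)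

theorem hasSum_diag_mul_re_inner_sum_rankOne (hd : ∀ n, D (e n) = (d n : ℂ) • e n) :
    HasSum (fun n => d n * (⟪e n, (∑ i, (μ i : ℂ) • rankOne ℂ (v i) (v i)) (e n)⟫_ℂ).re)
      (∑ i, μ i * (⟪v i, D (v i)⟫_ℂ).re) := by
  have hterm : ∀ n, (d n : ℂ) * ⟪e n, (∑ i, (μ i : ℂ) • rankOne ℂ (v i) (v i)) (e n)⟫_ℂ
      = ∑ i, (μ i : ℂ) * (⟪v i, e n⟫_ℂ * ⟪e n, D (v i)⟫_ℂ) := fun n => by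
    simp only [sum_apply, smul_apply, rankOne_apply, inner_sum, inner_smul_right,
      Finset.mul_sum, inner_basis_apply_of_diag e hd]
    exact Finset.sum_congr rfl fun i _ => by ring
  have h := hasSum_sum fun i (_ : i ∈ Finset.univ) =>
    (e.hasSum_inner_mul_inner (v i) (D (v i))).mul_left (μ i : ℂ)
  simp_rw [← hterm] at h
  simpa using h.mapL Complex.reCLM

theorem hasSum_re_inner_sum_rankOne (hv : ∀ i, ‖v i‖ = 1) :
    HasSum (fun n => (⟪e n, (∑ i, (μ i : ℂ) • rankOne ℂ (v i) (v i)) (e n)⟫_ℂ).re)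
      (∑ i, μ i) := by
  simpa [inner_self_eq_norm_sq_to_K, hv] using
    hasSum_diag_mul_re_inner_sum_rankOne e (D := 1) (d := 1) v μ (by simp)

end Diagonal

theorem exists_le_of_sum_mul_eq {ι κ : Type*} [Fintype ι] [Fintype κ] {μ : ι → ℝ} {ν : κ → ℝ}
    (hμ : ∀ i, 0 ≤ μ i) (hν : ∀ j, 0 ≤ ν j) (hsum : ∑ i, μ i = ∑ j, ν j)
    (hpos : 0 < ∑ i, μ i) (a : ι → ℝ) (b : κ → ℝ) (h : ∑ i, μ i * a i = ∑ j, ν j * b j) :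
    ∃ i j, a i ≤ b j := by
  obtain ⟨i, -, hi⟩ := Finset.exists_min_image Finset.univ a
    (Finset.nonempty_of_sum_ne_zero hpos.ne')
  obtain ⟨j, -, hj⟩ := Finset.exists_max_image Finset.univ b
    (Finset.nonempty_of_sum_ne_zero (hsum ▸ hpos).ne')
  refine ⟨i, j, le_of_mul_le_mul_left ?_ hpos⟩
  calc (∑ k, μ k) * a i = ∑ k, μ k * a i := Finset.sum_mul ..
    _ ≤ ∑ k, μ k * a k := Finset.sum_le_sum fun k _ =>
        mul_le_mul_of_nonneg_left (hi k (Finset.mem_univ k)) (hμ k)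
    _ = ∑ l, ν l * b l := h
    _ ≤ ∑ l, ν l * b j := Finset.sum_le_sum fun l _ =>
        mul_le_mul_of_nonneg_left (hj l (Finset.mem_univ l)) (hν l)
    _ = (∑ k, μ k) * b j := by rw [← Finset.sum_mul, hsum]

theorem stmt_14_general (e : HilbertBasis ℕ ℂ H)
    (Ep Em : H →L[ℂ] H)
    (hEpidem : Ep * Ep = Ep)
    (hEpfin : FiniteDimensional ℂ (LinearMap.range (Ep : H →ₗ[ℂ] H)))
    (hEmidem : Em * Em = Em)
    (hEmfin : FiniteDimensional ℂ (LinearMap.range (Em : H →ₗ[ℂ] H)))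
    (X : H →L[ℂ] H) (hX : X ≠ 0) (hXsa : IsSelfAdjoint X)
    (hXdiag : ∀ n, ⟪e n, X (e n)⟫_ℂ = 0)
    (hXp : Ep * opPosPart X = opPosPart X) (hXm : Em * opNegPart X = opNegPart X) :
    ∀ D : H →L[ℂ] H, IsCompactOperator ⇑D → RealDiag e D →
      ∃ y z : H, Ep y = y ∧ Em z = z ∧ ‖y‖ = 1 ∧ ‖z‖ = 1 ∧
        (⟪y, D y⟫_ℂ).re ≤ (⟪z, D z⟫_ℂ).re := by
  intro D _ hD
  choose d hd using hD
  rw [opPosPart_eq_posPart hXsa] at hXp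
  rw [opNegPart_eq_negPart hXsa] at hXm
  obtain ⟨k, v, μ, hv, hvn, hμ, hP⟩ :=
    exists_nonneg_eq_sum_rankOne_of_mul_eq hEpidem hEpfin (CFC.posPart_nonneg X) hXp
  obtain ⟨l, w, ν, hw, hwn, hν, hN⟩ :=
    exists_nonneg_eq_sum_rankOne_of_mul_eq hEmidem hEmfin (CFC.negPart_nonneg X) hXm
  have hdiag : ∀ n, ⟪e n, X⁺ (e n)⟫_ℂ = ⟪e n, X⁻ (e n)⟫_ℂ := fun n => sub_eq_zero.mp <| by
    rw [← inner_sub_right, ← sub_apply, CFC.posPart_sub_negPart X hXsa, hXdiag n]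
  have htrace : ∑ i, μ i = ∑ j, ν j := by
    refine (hasSum_re_inner_sum_rankOne e v μ hvn).unique ?_
    simpa only [← hP, ← hN, hdiag] using hasSum_re_inner_sum_rankOne e w ν hwn
  have hDtrace : ∑ i, μ i * (⟪v i, D (v i)⟫_ℂ).re = ∑ j, ν j * (⟪w j, D (w j)⟫_ℂ).re := by
    refine (hasSum_diag_mul_re_inner_sum_rankOne e v μ hd).unique ?_
    simpa only [← hP, ← hN, hdiag] using hasSum_diag_mul_re_inner_sum_rankOne e w ν hd
  have hpos : 0 < ∑ i, μ i := by
    refine (Finset.sum_nonneg fun i _ => hμ i).lt_of_ne fun h0 => hX ?_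
    have hμ0 := (Finset.sum_eq_zero_iff_of_nonneg fun i _ => hμ i).mp h0.symm
    have hν0 := (Finset.sum_eq_zero_iff_of_nonneg fun j _ => hν j).mp (htrace ▸ h0.symm)
    rw [← CFC.posPart_sub_negPart X hXsa, hP, hN]
    simp [hμ0, hν0]
  obtain ⟨i, j, hij⟩ := exists_le_of_sum_mul_eq hμ hν htrace hpos _ _ hDtrace
  exact ⟨v i, w j, hv i, hw j, hvn i, hwn j, hij⟩

/-- if `A` is minimal with a witness `X`, then for every compact real
diagonal `D` there are unit vectors `y ∈ ran E₊`, `z ∈ ran E₋` with `⟨Dy,y⟩ ≤ ⟨Dz,z⟩`. -/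
theorem stmt_14 (e : HilbertBasis ℕ ℂ H) (A : H →L[ℂ] H)
    (hcomp : IsCompactOperator ⇑A) (hsa : IsSelfAdjoint A) (hA : 0 < ‖A‖)
    (hmax : sSup (spectrum ℝ A) = ‖A‖) (hmin : sInf (spectrum ℝ A) = -‖A‖)
    (Ep Em : H →L[ℂ] H)
    (hEpsa : IsSelfAdjoint Ep) (hEpidem : Ep * Ep = Ep)
    (hEp : ∀ x : H, Ep x = x ↔ A x = ((‖A‖ : ℝ) : ℂ) • x)
    (hEpfin : FiniteDimensional ℂ (LinearMap.range (Ep : H →ₗ[ℂ] H)))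
    (hEmsa : IsSelfAdjoint Em) (hEmidem : Em * Em = Em)
    (hEm : ∀ x : H, Em x = x ↔ A x = ((-‖A‖ : ℝ) : ℂ) • x)
    (hEmfin : FiniteDimensional ℂ (LinearMap.range (Em : H →ₗ[ℂ] H)))
    (X : H →L[ℂ] H) (hX : X ≠ 0) (hXsa : IsSelfAdjoint X) (hXtc : IsTraceClass e X)
    (hXdiag : ∀ n, ⟪e n, X (e n)⟫_ℂ = 0)
    (hXp : Ep * opPosPart X = opPosPart X) (hXm : Em * opNegPart X = opNegPart X)
    (htr : opTrace e (X * A) = ((‖A‖ * traceNorm e X : ℝ) : ℂ)) :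
    ∀ D : H →L[ℂ] H, IsCompactOperator ⇑D → RealDiag e D →
      ∃ y z : H, Ep y = y ∧ Em z = z ∧ ‖y‖ = 1 ∧ ‖z‖ = 1 ∧
        (⟪y, D y⟫_ℂ).re ≤ (⟪z, D z⟫_ℂ).re :=
  stmt_14_general e Ep Em hEpidem hEpfin hEmidem hEmfin X hX hXsa hXdiag hXp hXm
end
end
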